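/- Let p be a {0,1}-valued (n,n,n)-array. Construct 2-marginals for 3-arrays of size (3, n², 3n) as in the reduction from 3-dimensional matching (with U = 1, dom/row/col groups). Then the set of nonnegative real (n,n,n)-arrays x with all 1-marginals equal to 1 and x ≤ p entrywise is in bijection with the set of nonnegative real (3, n², 3n)-arrays y with the constructed 2-marginals, via x_{i,j,k} = y_{1,ij,dom k}, and this bijection preserves integrality. Consequently, a 3-dimensional matching dominated by p exists if and only if a nonnegative integer (3, n², 3n)-table with the constructed 2-marginals exists. -/

import Mathlib

/-- `U = min (max_i u1 i) (max_j u2 j)` of the Theorem 1.4 construction. -/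
def bigU (r c : ℕ) (u1 : Fin r → ℕ) (u2 : Fin c → ℕ) : ℕ :=
  min (Finset.univ.sup u1) (Finset.univ.sup u2)

open Sum in
/-- `v_{+,ij,gro k}` of the construction. -/
def margA (r c h : ℕ) (u1 : Fin r → ℕ) (u2 : Fin c → ℕ)
    (p : Fin r → Fin c → Fin h → ℕ) :
    Fin r × Fin c → (Fin h ⊕ Fin r ⊕ Fin c) → ℝ := fun a g =>
  match g with
  | inl k => (p a.1 a.2 k : ℝ)
  | inr (inl i) => if i = a.1 then (bigU r c u1 u2 : ℝ) else 0
  | inr (inr j) => if j = a.2 then (bigU r c u1 u2 : ℝ) else 0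

/-- `v_{t,ij,+}` of the construction. -/
def margT (r c h : ℕ) (u1 : Fin r → ℕ) (u2 : Fin c → ℕ)
    (p : Fin r → Fin c → Fin h → ℕ) :
    Fin 3 → Fin r × Fin c → ℝ := fun t a =>
  if t = 1 then ∑ k, (p a.1 a.2 k : ℝ) else (bigU r c u1 u2 : ℝ)

open Sum in
/-- `v_{t,+,gro k}` of the construction. -/
def margG (r c h : ℕ) (u1 : Fin r → ℕ) (u2 : Fin c → ℕ) (u3 : Fin h → ℕ)
    (p : Fin r → Fin c → Fin h → ℕ) :
    Fin 3 → (Fin h ⊕ Fin r ⊕ Fin c) → ℝ := fun t g =>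
  match g with
  | inl k => if t = 0 then (u3 k : ℝ)
      else if t = 1 then (∑ i, ∑ j, (p i j k : ℝ)) - (u3 k : ℝ) else 0
  | inr (inl i) => if t = 0 then (c : ℝ) * (bigU r c u1 u2 : ℝ) - (u1 i : ℝ)
      else if t = 1 then 0 else (u1 i : ℝ)
  | inr (inr j) => if t = 0 then 0
      else if t = 1 then (u2 j : ℝ)
      else (r : ℝ) * (bigU r c u1 u2 : ℝ) - (u2 j : ℝ)


/-!
With `U = 1`, a fractional matching `x` determines its table. In layers `0, 1, 2` (the paper's
`1, 2, 3`) the `dom k` entries of the pair `(i, j)` are `x i j k`, `p i j k - x i j k` and `0`;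
with `s = ∑ k, x i j k`, its only nonzero `row`/`col` entries are `row i ↦ (1 - s, 0, s)` and
`col j ↦ (0, s, 1 - s)`. The margins over groups and over layers then hold identically, and
those over pairs are exactly the 1-marginal conditions on `x`. Conversely, the vanishing
margins together with nonnegativity force every table into this shape, so a table is recovered
from its layer-`0` `dom` entries. All entries are integer combinations of those of `x` and `p`,
so integrality is preserved both ways.
-/

open Sum

lemma bigU_const_one {n : ℕ} (i : Fin n) : bigU n n (fun _ => 1) (fun _ => 1) = 1 := by
  simp [bigU, Finset.sup_const ⟨i, Finset.mem_univ i⟩]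

section Reduction

variable {n : ℕ} (p : Fin n → Fin n → Fin n → ℕ)

def IsFractionalMatching (x : Fin n → Fin n → Fin n → ℝ) : Prop :=
  (∀ i j k, 0 ≤ x i j k) ∧
  (∀ i j k, x i j k ≤ (p i j k : ℝ)) ∧
  (∀ i, ∑ j, ∑ k, x i j k = 1) ∧
  (∀ j, ∑ i, ∑ k, x i j k = 1) ∧
  (∀ k, ∑ i, ∑ j, x i j k = 1)

def HasReductionMargins (y : Fin 3 → Fin n × Fin n → (Fin n ⊕ Fin n ⊕ Fin n) → ℝ) :
    Prop :=
  (∀ t a, ∑ g, y t a g = margT n n n (fun _ => 1) (fun _ => 1) p t a) ∧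
  (∀ t g, ∑ a, y t a g = margG n n n (fun _ => 1) (fun _ => 1) (fun _ => 1) p t g) ∧
  (∀ a g, ∑ t, y t a g = margA n n n (fun _ => 1) (fun _ => 1) p a g)

def IsReductionTable (y : Fin 3 → Fin n × Fin n → (Fin n ⊕ Fin n ⊕ Fin n) → ℝ) :
    Prop :=
  (∀ t a g, 0 ≤ y t a g) ∧ HasReductionMargins p y

def toTable (x : Fin n → Fin n → Fin n → ℝ) :
    Fin 3 → Fin n × Fin n → (Fin n ⊕ Fin n ⊕ Fin n) → ℝ := fun t a g =>
  match g with
  | inl k => if t = 0 then x a.1 a.2 k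
      else if t = 1 then (p a.1 a.2 k : ℝ) - x a.1 a.2 k else 0
  | inr (inl i) => if i = a.1 then
      (if t = 0 then 1 - ∑ k, x a.1 a.2 k else if t = 1 then 0 else ∑ k, x a.1 a.2 k) else 0
  | inr (inr j) => if j = a.2 then
      (if t = 0 then 0 else if t = 1 then ∑ k, x a.1 a.2 k else 1 - ∑ k, x a.1 a.2 k) else 0

def ofTable (y : Fin 3 → Fin n × Fin n → (Fin n ⊕ Fin n ⊕ Fin n) → ℝ) :
    Fin n → Fin n → Fin n → ℝ := fun i j k => y 0 (i, j) (inl k)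

variable {p}

lemma sum_toTable_groups (x : Fin n → Fin n → Fin n → ℝ) (t : Fin 3) (a : Fin n × Fin n) :
    ∑ g, toTable p x t a g = margT n n n (fun _ => 1) (fun _ => 1) p t a := by
  fin_cases t <;>
    simp [toTable, margT, Fintype.sum_sum_type, Finset.sum_ite_eq', bigU_const_one a.1]

lemma sum_toTable_layers (x : Fin n → Fin n → Fin n → ℝ) (a : Fin n × Fin n)
    (g : Fin n ⊕ Fin n ⊕ Fin n) :
    ∑ t, toTable p x t a g = margA n n n (fun _ => 1) (fun _ => 1) p a g := by
  rcases g with k | i | j <;> simp [toTable, margA, Fin.sum_univ_three, bigU_const_one a.1]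

lemma sum_toTable_pairs_eq_margG_iff (x : Fin n → Fin n → Fin n → ℝ) :
    (∀ t g, ∑ a, toTable p x t a g =
        margG n n n (fun _ => 1) (fun _ => 1) (fun _ => 1) p t g) ↔
      (∀ i, ∑ j, ∑ k, x i j k = 1) ∧ (∀ j, ∑ i, ∑ k, x i j k = 1) ∧
        (∀ k, ∑ i, ∑ j, x i j k = 1) := by
  constructor
  · intro h
    refine ⟨fun i => ?_, fun j => ?_, fun k => ?_⟩
    · simpa [toTable, margG, Fintype.sum_prod_type, bigU_const_one i] using h 2 (inr (inl i))
    · simpa [toTable, margG, Fintype.sum_prod_type, bigU_const_one j] using h 1 (inr (inr j))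
    · simpa [toTable, margG, Fintype.sum_prod_type] using h 0 (inl k)
  · rintro ⟨hi, hj, hk⟩ t (k | i | j)
    · fin_cases t <;> simp [toTable, margG, Fintype.sum_prod_type, Finset.sum_sub_distrib, hk]
    · fin_cases t <;> simp [toTable, margG, Fintype.sum_prod_type, bigU_const_one i, hi]
    · fin_cases t <;> simp [toTable, margG, Fintype.sum_prod_type, bigU_const_one j, hj]

lemma IsFractionalMatching.sum_le_one {x : Fin n → Fin n → Fin n → ℝ}
    (hx : IsFractionalMatching p x) (i j : Fin n) : ∑ k, x i j k ≤ 1 :=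
  calc ∑ k, x i j k ≤ ∑ j', ∑ k, x i j' k :=
        Finset.single_le_sum (f := fun j' => ∑ k, x i j' k)
          (fun j' _ => Finset.sum_nonneg fun k _ => hx.1 i j' k) (Finset.mem_univ j)
    _ = 1 := hx.2.2.1 i

lemma IsFractionalMatching.toTable_nonneg {x : Fin n → Fin n → Fin n → ℝ}
    (hx : IsFractionalMatching p x) (t : Fin 3) (a : Fin n × Fin n)
    (g : Fin n ⊕ Fin n ⊕ Fin n) : 0 ≤ toTable p x t a g := by
  have hs0 : 0 ≤ ∑ k, x a.1 a.2 k := Finset.sum_nonneg fun k _ => hx.1 _ _ k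
  have hs1 := hx.sum_le_one a.1 a.2
  rcases g with k | i | j <;> fin_cases t <;> simp only [toTable] <;> split_ifs <;>
    simp [hx.1, hx.2.1, hs0, hs1]

lemma isReductionTable_toTable_iff {x : Fin n → Fin n → Fin n → ℝ} :
    IsReductionTable p (toTable p x) ↔ IsFractionalMatching p x := by
  constructor
  · rintro ⟨h0, -, hG, -⟩
    refine ⟨fun i j k => ?_, fun i j k => ?_, (sum_toTable_pairs_eq_margG_iff x).1 hG⟩
    · simpa [toTable] using h0 0 (i, j) (inl k)
    · simpa [toTable] using h0 1 (i, j) (inl k)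
  · intro hx
    exact ⟨hx.toTable_nonneg, sum_toTable_groups x,
      (sum_toTable_pairs_eq_margG_iff x).2 hx.2.2, sum_toTable_layers x⟩

namespace IsReductionTable

variable {y : Fin 3 → Fin n × Fin n → (Fin n ⊕ Fin n ⊕ Fin n) → ℝ}
  (hy : IsReductionTable p y)
include hy

lemma eq_zero_of_margG_eq_zero {t : Fin 3} {g : Fin n ⊕ Fin n ⊕ Fin n}
    (h : margG n n n (fun _ => 1) (fun _ => 1) (fun _ => 1) p t g = 0) (a : Fin n × Fin n) :
    y t a g = 0 :=
  (Finset.sum_eq_zero_iff_of_nonneg fun b _ => hy.1 t b g).1 ((hy.2.2.1 t g).trans h) a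
    (Finset.mem_univ a)

lemma eq_zero_of_margA_eq_zero {a : Fin n × Fin n} {g : Fin n ⊕ Fin n ⊕ Fin n}
    (h : margA n n n (fun _ => 1) (fun _ => 1) p a g = 0) (t : Fin 3) : y t a g = 0 :=
  (Finset.sum_eq_zero_iff_of_nonneg fun s _ => hy.1 s a g).1 ((hy.2.2.2 a g).trans h) t
    (Finset.mem_univ t)

lemma two_dom (a : Fin n × Fin n) (k : Fin n) : y 2 a (inl k) = 0 :=
  hy.eq_zero_of_margG_eq_zero (by simp [margG]) a

lemma one_row (a : Fin n × Fin n) (i : Fin n) : y 1 a (inr (inl i)) = 0 :=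
  hy.eq_zero_of_margG_eq_zero (by simp [margG]) a

lemma zero_col (a : Fin n × Fin n) (j : Fin n) : y 0 a (inr (inr j)) = 0 :=
  hy.eq_zero_of_margG_eq_zero (by simp [margG]) a

lemma row_of_ne {a : Fin n × Fin n} {i : Fin n} (h : i ≠ a.1) (t : Fin 3) :
    y t a (inr (inl i)) = 0 :=
  hy.eq_zero_of_margA_eq_zero (by simp [margA, h]) t

lemma col_of_ne {a : Fin n × Fin n} {j : Fin n} (h : j ≠ a.2) (t : Fin 3) :
    y t a (inr (inr j)) = 0 :=
  hy.eq_zero_of_margA_eq_zero (by simp [margA, h]) t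

lemma zero_dom_add_one_dom (a : Fin n × Fin n) (k : Fin n) :
    y 0 a (inl k) + y 1 a (inl k) = p a.1 a.2 k := by
  simpa [Fin.sum_univ_three, margA, hy.two_dom] using hy.2.2.2 a (inl k)

lemma sum_groups (t : Fin 3) (a : Fin n × Fin n) :
    ∑ g, y t a g = ∑ k, y t a (inl k) + y t a (inr (inl a.1)) + y t a (inr (inr a.2)) := by
  rw [Fintype.sum_sum_type, Fintype.sum_sum_type,
    Fintype.sum_eq_single a.1 fun i h => hy.row_of_ne h t,
    Fintype.sum_eq_single a.2 fun j h => hy.col_of_ne h t, add_assoc]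

lemma zero_row (a : Fin n × Fin n) :
    y 0 a (inr (inl a.1)) = 1 - ∑ k, ofTable y a.1 a.2 k := by
  have h := hy.2.1 0 a
  simp only [hy.sum_groups, hy.zero_col, margT, bigU_const_one a.1] at h
  simp only [ofTable]
  norm_num at h
  linarith

lemma two_row (a : Fin n × Fin n) :
    y 2 a (inr (inl a.1)) = ∑ k, ofTable y a.1 a.2 k := by
  have h := hy.2.2.2 a (inr (inl a.1))
  simp only [Fin.sum_univ_three, hy.zero_row, hy.one_row, margA, bigU_const_one a.1] at h
  norm_num at h
  linarith

lemma one_col (a : Fin n × Fin n) :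
    y 1 a (inr (inr a.2)) = ∑ k, ofTable y a.1 a.2 k := by
  have h := hy.2.1 1 a
  have hdom : ∑ k, y 1 a (inl k) = ∑ k, ((p a.1 a.2 k : ℝ) - ofTable y a.1 a.2 k) :=
    Finset.sum_congr rfl fun k _ => by simp only [ofTable, ← hy.zero_dom_add_one_dom]; ring
  simp only [hy.sum_groups, hy.one_row, hdom, Finset.sum_sub_distrib, margT] at h
  norm_num at h
  linarith

lemma two_col (a : Fin n × Fin n) :
    y 2 a (inr (inr a.2)) = 1 - ∑ k, ofTable y a.1 a.2 k := by
  have h := hy.2.2.2 a (inr (inr a.2))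
  simp only [Fin.sum_univ_three, hy.zero_col, hy.one_col, margA, bigU_const_one a.1] at h
  norm_num at h
  linarith

lemma toTable_ofTable : toTable p (ofTable y) = y := by
  funext t a g
  rcases g with k | i | j
  · fin_cases t
    · rfl
    · simp [toTable, ofTable, ← hy.zero_dom_add_one_dom]
    · simp [toTable, hy.two_dom]
  · rcases eq_or_ne i a.1 with rfl | hi
    · fin_cases t <;> simp [toTable, hy.zero_row, hy.one_row, hy.two_row]
    · simp [toTable, hi, hy.row_of_ne hi]
  · rcases eq_or_ne j a.2 with rfl | hj
    · fin_cases t <;> simp [toTable, hy.zero_col, hy.one_col, hy.two_col]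
    · simp [toTable, hj, hy.col_of_ne hj]

lemma isFractionalMatching_ofTable : IsFractionalMatching p (ofTable y) := by
  rw [← isReductionTable_toTable_iff, hy.toTable_ofTable]
  exact hy

end IsReductionTable

lemma toTable_mem_of_forall_mem (S : Subring ℝ) {x : Fin n → Fin n → Fin n → ℝ}
    (hx : ∀ i j k, x i j k ∈ S) (t : Fin 3) (a : Fin n × Fin n)
    (g : Fin n ⊕ Fin n ⊕ Fin n) :
    toTable p x t a g ∈ S := by
  have hs : ∑ k, x a.1 a.2 k ∈ S := S.sum_mem fun k _ => hx _ _ k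
  rcases g with k | i | j <;> simp only [toTable] <;> split_ifs <;>
    first
    | exact hx _ _ _
    | exact hs
    | exact S.zero_mem
    | exact S.sub_mem (natCast_mem S _) (hx _ _ _)
    | exact S.sub_mem S.one_mem hs

lemma toTable_isInt_iff (x : Fin n → Fin n → Fin n → ℝ) :
    (∀ i j k, ∃ m : ℤ, x i j k = m) ↔ ∀ t a g, ∃ m : ℤ, toTable p x t a g = m := by
  have mem_range (z : ℝ) : (∃ m : ℤ, z = m) ↔ z ∈ (Int.castRingHom ℝ).range := by
    simp [eq_comm]
  simp only [mem_range]
  exact ⟨toTable_mem_of_forall_mem _, fun h i j k => h 0 (i, j) (inl k)⟩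

variable (p) in
def fractionalMatchingEquivReductionTable :
    {x // IsFractionalMatching p x} ≃ {y // IsReductionTable p y} where
  toFun x := ⟨toTable p x, isReductionTable_toTable_iff.2 x.2⟩
  invFun y := ⟨ofTable y.1, y.2.isFractionalMatching_ofTable⟩
  left_inv _ := rfl
  right_inv y := Subtype.ext y.2.toTable_ofTable

lemma isFractionalMatching_natCast_iff (x : Fin n → Fin n → Fin n → ℕ) :
    IsFractionalMatching p (fun i j k => (x i j k : ℝ)) ↔
      (∀ i j k, x i j k ≤ p i j k) ∧ (∀ i, ∑ j, ∑ k, x i j k = 1) ∧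
        (∀ j, ∑ i, ∑ k, x i j k = 1) ∧ (∀ k, ∑ i, ∑ j, x i j k = 1) := by
  simp only [IsFractionalMatching, Nat.cast_nonneg, implies_true, Nat.cast_le, true_and,
    ← Nat.cast_sum, Nat.cast_eq_one]

lemma natCast_floor_of_isInt {z : ℝ} (h0 : 0 ≤ z) (hz : ∃ m : ℤ, z = m) :
    (⌊z⌋₊ : ℝ) = z := by
  obtain ⟨m, rfl⟩ := hz
  lift m to ℕ using Int.cast_nonneg_iff.1 h0
  simp

lemma exists_matching_iff_exists_nat_table :
    (∃ x : Fin n → Fin n → Fin n → ℕ,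
        (∀ i j k, x i j k ≤ p i j k) ∧ (∀ i, ∑ j, ∑ k, x i j k = 1) ∧
        (∀ j, ∑ i, ∑ k, x i j k = 1) ∧ (∀ k, ∑ i, ∑ j, x i j k = 1)) ↔
      ∃ y : Fin 3 → Fin n × Fin n → (Fin n ⊕ Fin n ⊕ Fin n) → ℕ,
        HasReductionMargins p fun t a g => (y t a g : ℝ) := by
  constructor
  · rintro ⟨x, hx⟩
    have hy := isReductionTable_toTable_iff.2 ((isFractionalMatching_natCast_iff x).2 hx)
    have hint := (toTable_isInt_iff (p := p) fun i j k => (x i j k : ℝ)).1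
      fun i j k => ⟨x i j k, by simp⟩
    refine ⟨fun t a g => ⌊toTable p (fun i j k => (x i j k : ℝ)) t a g⌋₊, ?_⟩
    simpa only [natCast_floor_of_isInt (hy.1 _ _ _) (hint _ _ _)] using hy.2
  · rintro ⟨y, hy⟩
    exact ⟨_, (isFractionalMatching_natCast_iff _).1
      (IsReductionTable.isFractionalMatching_ofTable ⟨fun _ _ _ => Nat.cast_nonneg _, hy⟩)⟩

end Reduction

open Sum in
theorem matching_reduction_general (n : ℕ) (p : Fin n → Fin n → Fin n → ℕ) :
    ∃ e : {x : Fin n → Fin n → Fin n → ℝ //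
            (∀ i j k, 0 ≤ x i j k) ∧
            (∀ i j k, x i j k ≤ (p i j k : ℝ)) ∧
            (∀ i, ∑ j, ∑ k, x i j k = 1) ∧
            (∀ j, ∑ i, ∑ k, x i j k = 1) ∧
            (∀ k, ∑ i, ∑ j, x i j k = 1)} ≃
         {y : Fin 3 → Fin n × Fin n → (Fin n ⊕ Fin n ⊕ Fin n) → ℝ //
            (∀ t a g, 0 ≤ y t a g) ∧
            (∀ t a, ∑ g, y t a g = margT n n n (fun _ => 1) (fun _ => 1) p t a) ∧
            (∀ t g, ∑ a, y t a g =
              margG n n n (fun _ => 1) (fun _ => 1) (fun _ => 1) p t g) ∧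
            (∀ a g, ∑ t, y t a g = margA n n n (fun _ => 1) (fun _ => 1) p a g)},
      (∀ x i j k, x.1 i j k = (e x).1 0 (i, j) (inl k)) ∧
      (∀ x, (∀ i j k, ∃ m : ℤ, x.1 i j k = (m : ℝ)) ↔
        (∀ t a g, ∃ m : ℤ, (e x).1 t a g = (m : ℝ))) ∧
      ((∃ x : Fin n → Fin n → Fin n → ℕ,
          (∀ i j k, x i j k ≤ p i j k) ∧
          (∀ i, ∑ j, ∑ k, x i j k = 1) ∧
          (∀ j, ∑ i, ∑ k, x i j k = 1) ∧
          (∀ k, ∑ i, ∑ j, x i j k = 1)) ↔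
        (∃ y : Fin 3 → Fin n × Fin n → (Fin n ⊕ Fin n ⊕ Fin n) → ℕ,
          (∀ t a, ∑ g, (y t a g : ℝ) = margT n n n (fun _ => 1) (fun _ => 1) p t a) ∧
          (∀ t g, ∑ a, (y t a g : ℝ) =
            margG n n n (fun _ => 1) (fun _ => 1) (fun _ => 1) p t g) ∧
          (∀ a g, ∑ t, (y t a g : ℝ) = margA n n n (fun _ => 1) (fun _ => 1) p a g))) :=
  ⟨fractionalMatchingEquivReductionTable p, fun _ _ _ _ => rfl,
    fun x => toTable_isInt_iff x.1, exists_matching_iff_exists_nat_table⟩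

open Sum in
/-- The reduction from 3-dimensional matching: dominated arrays with all
1-marginals 1 are in integer preserving bijection with slim (3,n²,3n)-arrays
with the constructed 2-marginals; hence a matching dominated by p exists iff
an integer slim table with the constructed 2-marginals exists. -/
theorem matching_reduction (n : ℕ) (p : Fin n → Fin n → Fin n → ℕ)
    (hp : ∀ i j k, p i j k ≤ 1) (hk : ∀ k, 1 ≤ ∑ i, ∑ j, p i j k) :
    ∃ e : {x : Fin n → Fin n → Fin n → ℝ //
            (∀ i j k, 0 ≤ x i j k) ∧
            (∀ i j k, x i j k ≤ (p i j k : ℝ)) ∧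
            (∀ i, ∑ j, ∑ k, x i j k = 1) ∧
            (∀ j, ∑ i, ∑ k, x i j k = 1) ∧
            (∀ k, ∑ i, ∑ j, x i j k = 1)} ≃
         {y : Fin 3 → Fin n × Fin n → (Fin n ⊕ Fin n ⊕ Fin n) → ℝ //
            (∀ t a g, 0 ≤ y t a g) ∧
            (∀ t a, ∑ g, y t a g = margT n n n (fun _ => 1) (fun _ => 1) p t a) ∧
            (∀ t g, ∑ a, y t a g =
              margG n n n (fun _ => 1) (fun _ => 1) (fun _ => 1) p t g) ∧
            (∀ a g, ∑ t, y t a g = margA n n n (fun _ => 1) (fun _ => 1) p a g)},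
      (∀ x i j k, x.1 i j k = (e x).1 0 (i, j) (inl k)) ∧
      (∀ x, (∀ i j k, ∃ m : ℤ, x.1 i j k = (m : ℝ)) ↔
        (∀ t a g, ∃ m : ℤ, (e x).1 t a g = (m : ℝ))) ∧
      ((∃ x : Fin n → Fin n → Fin n → ℕ,
          (∀ i j k, x i j k ≤ p i j k) ∧
          (∀ i, ∑ j, ∑ k, x i j k = 1) ∧
          (∀ j, ∑ i, ∑ k, x i j k = 1) ∧
          (∀ k, ∑ i, ∑ j, x i j k = 1)) ↔
        (∃ y : Fin 3 → Fin n × Fin n → (Fin n ⊕ Fin n ⊕ Fin n) → ℕ,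
          (∀ t a, ∑ g, (y t a g : ℝ) = margT n n n (fun _ => 1) (fun _ => 1) p t a) ∧
          (∀ t g, ∑ a, (y t a g : ℝ) =
            margG n n n (fun _ => 1) (fun _ => 1) (fun _ => 1) p t g) ∧
          (∀ a g, ∑ t, (y t a g : ℝ) = margA n n n (fun _ => 1) (fun _ => 1) p a g))) :=
  matching_reduction_general n p
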